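/- Let F be a field of characteristic zero, and let (V, ∇) be a differential module over F((t)) of rank n. Fix a positive integer d, and let V[t^{1/d}] = V ⊗_{F((t))} F((t^{1/d})) with its induced connection. If V[t^{1/d}] is Fredholm (as a differential module over F((t)), equivalently its de Rham complex over F is perfect), then (V, ∇) is Fredholm. More precisely, as a differential module over F((t)), V[t^{1/d}] decomposes as the direct sum over i = 0,...,d-1 of V ⊗ χ_{i/d}, where χ_{i/d} is the rank one connection d + (i/d) dt/t; in particular V is a direct summand of V[t^{1/d}]. -/

import Mathlib

open HahnSeries

/-- The formal derivative (`d/dt`, resp. `d/du` on the extension) on Laurent series. -/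
noncomputable def lderiv (F : Type*) [CommRing F] : LaurentSeries F →ₗ[F] LaurentSeries F where
  toFun f :=
    { coeff := fun n => (n + 1 : ℤ) • f.coeff (n + 1)
      isPWO_support' := by
        have hsub : (Function.support fun n : ℤ => (n + 1 : ℤ) • f.coeff (n + 1)) ⊆
            (fun m : ℤ => m - 1) '' f.support := by
          intro n hn
          refine ⟨n + 1, fun h0 => ?_, by ring⟩
          apply hn
          simp [h0]
        exact ((f.isPWO_support.image_of_monotoneOn
          (fun a _ b _ hab => sub_le_sub_right hab 1)).mono hsub) }
  map_add' f g := by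
    ext m
    simp [smul_add]
  map_smul' a f := by
    ext m
    simp only [HahnSeries.coeff_smul, RingHom.id_apply, zsmul_eq_mul, smul_eq_mul]
    push_cast
    ring

/-- The inclusion `F((t)) → F((t^{1/d}))`, modelled as the ring endomorphism of Laurent
series sending `t` to `u^d` (i.e. scaling all exponents by `d`). -/
noncomputable def rootEmbedding (F : Type*) [CommRing F] (d : ℕ) (hd : 0 < d) :
    LaurentSeries F →+* LaurentSeries F :=
  HahnSeries.embDomainRingHom (zmultiplesHom ℤ (d : ℤ))
    (by
      intro a b hab
      have h' : a * (d : ℤ) = b * (d : ℤ) := by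
        simpa [zmultiplesHom_apply, smul_eq_mul] using hab
      exact mul_right_cancel₀ (by exact_mod_cast hd.ne' : (d : ℤ) ≠ 0) h')
    (by
      intro a b
      simp only [zmultiplesHom_apply, smul_eq_mul]
      exact mul_le_mul_iff_of_pos_right (by exact_mod_cast hd))

/-!
Write `u = t^{1/d}`, so that `rootEmbedding` is `σ : f(t) ↦ f(u^d)`. Every `g ∈ F((u))` splits
uniquely as `∑_{r<d} uʳ σ(g_r)`; applied to coordinates this splits `V' = ⨁_{r<d} uʳ ι(V)` over
`F`, with projections `P_r : V' → V`. By Leibniz, `∇'(uʳ ι v) = d u^{r+d-1} ι(∇ v) + r u^{r-1} ι v`,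
and only the summand `r = 0` reaches the component `d - 1`, so `P_{d-1} ∘ ∇' = d • ∇ ∘ P_0`.
Hence `ι` embeds `ker ∇` into `ker ∇'`, and `P_{d-1}`, onto because `P_{d-1}(u^{d-1} ι v) = v`,
induces a surjection `coker ∇' → coker ∇`.
-/

section Polyphase

variable {F : Type*} [CommRing F] {d : ℕ}

theorem single_zero_smul {M : Type*} [AddCommMonoid M] [Module (LaurentSeries F) M] [Module F M]
    [IsScalarTower F (LaurentSeries F) M] (a : F) (w : M) :
    (single 0 a : LaurentSeries F) • w = a • w := by
  rw [← smul_one_smul (LaurentSeries F) a w, ← single_zero_mul_eq_smul, mul_one]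

theorem lderiv_single (k : ℤ) (a : F) :
    lderiv F (single k a) = single (k - 1) ((k : ℤ) • a) := by
  ext n
  show (n + 1 : ℤ) • (single k a).coeff (n + 1) = _
  by_cases h : n = k - 1
  · subst h
    simp
  · rw [coeff_single_of_ne (by omega), coeff_single_of_ne h, smul_zero]

theorem coeff_rootEmbedding (hd : 0 < d) (f : LaurentSeries F) (e : ℤ) :
    (rootEmbedding F d hd f).coeff e = if (d : ℤ) ∣ e then f.coeff (e / d) else 0 := by
  split_ifs with h
  · obtain ⟨m, rfl⟩ := h
    rw [Int.mul_ediv_cancel_left _ (by omega), mul_comm]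
    exact embDomain_coeff (a := m)
  · refine embDomain_of_notMem_range ?_
    rintro ⟨m, rfl⟩
    exact h ⟨m, mul_comm m d⟩

theorem rootEmbedding_single (hd : 0 < d) (k : ℤ) (c : F) :
    rootEmbedding F d hd (single k c) = single (k * d) c := by
  show embDomain _ _ = _
  rw [embDomain_single]
  rfl

variable (F) in
noncomputable def polyphase (hd : 0 < d) (r : ℤ) : LaurentSeries F →ₗ[F] LaurentSeries F where
  toFun g :=
    { coeff := fun m => g.coeff (d * m + r)
      isPWO_support' := by
        have hsub : (Function.support fun m : ℤ => g.coeff (d * m + r)) ⊆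
            (fun n : ℤ => (n - r) / d) '' g.support := by
          intro m hm
          refine ⟨d * m + r, hm, ?_⟩
          simp only [add_sub_cancel_right]
          rw [mul_comm, Int.mul_ediv_cancel _ (by omega)]
        exact (g.isPWO_support.image_of_monotoneOn fun a _ b _ hab =>
          Int.ediv_le_ediv (by omega) (sub_le_sub_right hab r)).mono hsub }
  map_add' f g := by ext m; simp
  map_smul' a f := by ext m; simp

@[simp]
theorem coeff_polyphase (hd : 0 < d) (r : ℤ) (g : LaurentSeries F) (m : ℤ) :
    (polyphase F hd r g).coeff m = g.coeff (d * m + r) := rfl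

theorem polyphase_single_mul_rootEmbedding_self (hd : 0 < d) (r : ℤ) (c : F)
    (f : LaurentSeries F) :
    polyphase F hd r (single r c * rootEmbedding F d hd f) = c • f := by
  ext m
  simp [coeff_single_mul, coeff_rootEmbedding, Int.mul_ediv_cancel_left _ (by omega : (d : ℤ) ≠ 0)]

theorem polyphase_single_mul_rootEmbedding_of_not_dvd (hd : 0 < d) {r k : ℤ} (c : F)
    (f : LaurentSeries F) (h : ¬ (d : ℤ) ∣ k - r) :
    polyphase F hd r (single k c * rootEmbedding F d hd f) = 0 := by
  ext m
  rw [coeff_polyphase, coeff_single_mul, coeff_rootEmbedding, if_neg, mul_zero, coeff_zero]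
  rintro ⟨j, hj⟩
  exact h ⟨m - j, by linarith⟩

theorem sum_single_mul_rootEmbedding_polyphase (hd : 0 < d) (g : LaurentSeries F) :
    ∑ r ∈ Finset.range d, single (r : ℤ) 1 * rootEmbedding F d hd (polyphase F hd r g) = g := by
  ext e
  have hd' : (d : ℤ) ≠ 0 := by omega
  have hdvd_iff : ∀ r ∈ Finset.range d, (d : ℤ) ∣ e - r ↔ r = (e % d).toNat := by
    intro r hr
    have hr : (r : ℤ) < d := by exact_mod_cast Finset.mem_range.mp hr
    rw [Int.dvd_iff_emod_eq_zero, ← Int.emod_eq_emod_iff_emod_sub_eq_zero,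
      Int.emod_eq_of_lt (by omega) hr]
    have := Int.emod_nonneg e hd'
    omega
  have hmem : (e % d).toNat ∈ Finset.range d := by
    have := Int.emod_lt_of_pos e (by omega : (0 : ℤ) < d)
    rw [Finset.mem_range]
    omega
  rw [coeff_sum, Finset.sum_eq_single_of_mem _ hmem]
  · rw [coeff_single_mul, coeff_rootEmbedding, if_pos ((hdvd_iff _ hmem).mpr rfl), one_mul,
      coeff_polyphase, Int.mul_ediv_cancel' ((hdvd_iff _ hmem).mpr rfl), sub_add_cancel]
  · intro r hr hne
    rw [coeff_single_mul, coeff_rootEmbedding, if_neg (fun h => hne ((hdvd_iff r hr).mp h)),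
      mul_zero]

end Polyphase

section BaseChange

variable {F : Type*} [CommRing F] {d : ℕ} {hd : 0 < d} {κ : Type*} [Fintype κ]
  {V V' : Type*} [AddCommGroup V] [Module (LaurentSeries F) V] [AddCommGroup V']
  [Module (LaurentSeries F) V'] {bV : Module.Basis κ (LaurentSeries F) V}
  {bV' : Module.Basis κ (LaurentSeries F) V'} {ι : V →ₛₗ[rootEmbedding F d hd] V'}

theorem map_eq_sum_rootEmbedding_repr_smul (hbasis : ∀ i, bV' i = ι (bV i)) (v : V) :
    ι v = ∑ i, rootEmbedding F d hd (bV.repr v i) • bV' i := by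
  conv_lhs => rw [← bV.sum_repr v]
  simp only [map_sum, ι.map_smulₛₗ, hbasis]

variable [Module F V] [Module F V'] {nabla : V →ₗ[F] V} {nabla' : V' →ₗ[F] V'}

theorem nabla_single_smul_map_of_compat
    (hLeib' : ∀ (g : LaurentSeries F) (w : V'), nabla' (g • w) = g • nabla' w + lderiv F g • w)
    (hcompat : ∀ v : V,
      nabla' (ι v) = (single ((d : ℤ) - 1) (d : F) : LaurentSeries F) • ι (nabla v))
    (k : ℤ) (v : V) :
    nabla' (single k (1 : F) • ι v) =
      single (k + ((d : ℤ) - 1)) (d : F) • ι (nabla v) + single (k - 1) (k • (1 : F)) • ι v := by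
  rw [hLeib', hcompat, lderiv_single, smul_smul, single_mul_single, one_mul]

variable [IsScalarTower F (LaurentSeries F) V] [IsScalarTower F (LaurentSeries F) V']

noncomputable def restrictScalarsOfRootEmbedding (ι : V →ₛₗ[rootEmbedding F d hd] V') :
    V →ₗ[F] V' where
  toFun := ι
  map_add' := ι.map_add
  map_smul' a v := by
    rw [RingHom.id_apply, ← single_zero_smul a v, ι.map_smulₛₗ, rootEmbedding_single, zero_mul,
      single_zero_smul]

@[simp]
theorem restrictScalarsOfRootEmbedding_apply (ι : V →ₛₗ[rootEmbedding F d hd] V') (v : V) :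
    restrictScalarsOfRootEmbedding ι v = ι v := rfl

variable (hd bV bV') in
/-- When `bV' = ι ∘ bV`, this is an `F`-linear retraction of `v ↦ uʳ • ι v`. -/
noncomputable def polyphaseProj (r : ℤ) : V' →ₗ[F] V where
  toFun w := ∑ i, polyphase F hd r (bV'.repr w i) • bV i
  map_add' w₁ w₂ := by
    simp only [map_add, Finsupp.add_apply, add_smul, Finset.sum_add_distrib]
  map_smul' a w := by
    simp only [RingHom.id_apply, ← single_zero_smul a w, map_smul, Finsupp.smul_apply,
      smul_eq_mul, single_zero_mul_eq_smul, smul_assoc, Finset.smul_sum]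

theorem polyphaseProj_apply (r : ℤ) (w : V') :
    polyphaseProj hd bV bV' r w = ∑ i, polyphase F hd r (bV'.repr w i) • bV i := rfl

theorem polyphaseProj_smul_map (hbasis : ∀ i, bV' i = ι (bV i)) (r : ℤ) (g : LaurentSeries F)
    (v : V) :
    polyphaseProj hd bV bV' r (g • ι v) =
      ∑ i, polyphase F hd r (g * rootEmbedding F d hd (bV.repr v i)) • bV i := by
  rw [polyphaseProj_apply, map_eq_sum_rootEmbedding_repr_smul hbasis, Finset.smul_sum]
  simp_rw [smul_smul, bV'.repr_sum_self]

theorem polyphaseProj_single_smul_map_self (hbasis : ∀ i, bV' i = ι (bV i)) (r : ℤ) (c : F)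
    (v : V) : polyphaseProj hd bV bV' r (single r c • ι v) = c • v := by
  simp_rw [polyphaseProj_smul_map hbasis, polyphase_single_mul_rootEmbedding_self, smul_assoc,
    ← Finset.smul_sum, bV.sum_repr]

theorem polyphaseProj_single_smul_map_of_not_dvd (hbasis : ∀ i, bV' i = ι (bV i)) {r k : ℤ}
    (c : F) (v : V) (h : ¬ (d : ℤ) ∣ k - r) :
    polyphaseProj hd bV bV' r (single k c • ι v) = 0 := by
  simp_rw [polyphaseProj_smul_map hbasis, polyphase_single_mul_rootEmbedding_of_not_dvd _ _ _ h,
    zero_smul, Finset.sum_const_zero]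

theorem sum_single_smul_map_polyphaseProj (hbasis : ∀ i, bV' i = ι (bV i)) (w : V') :
    ∑ r ∈ Finset.range d, single (r : ℤ) (1 : F) • ι (polyphaseProj hd bV bV' r w) = w := by
  simp_rw [polyphaseProj_apply, map_sum, ι.map_smulₛₗ, ← hbasis, Finset.smul_sum, smul_smul]
  rw [Finset.sum_comm]
  simp_rw [← Finset.sum_smul, sum_single_mul_rootEmbedding_polyphase, bV'.sum_repr]

/-- Writing `w = ∑ᵣ uʳ ι(wᵣ)`, only `r = 0` contributes to the component `d - 1` of `∇' w`. -/
theorem polyphaseProj_pred_nabla_of_compat (hbasis : ∀ i, bV' i = ι (bV i))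
    (hLeib' : ∀ (g : LaurentSeries F) (w : V'), nabla' (g • w) = g • nabla' w + lderiv F g • w)
    (hcompat : ∀ v : V,
      nabla' (ι v) = (single ((d : ℤ) - 1) (d : F) : LaurentSeries F) • ι (nabla v))
    (w : V') :
    polyphaseProj hd bV bV' ((d : ℤ) - 1) (nabla' w) =
      (d : F) • nabla (polyphaseProj hd bV bV' 0 w) := by
  conv_lhs => rw [← sum_single_smul_map_polyphaseProj hbasis w]
  rw [map_sum, map_sum, Finset.sum_eq_single_of_mem 0 (Finset.mem_range.2 hd)]
  · rw [nabla_single_smul_map_of_compat hLeib' hcompat, map_add, Nat.cast_zero, zero_add,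
      polyphaseProj_single_smul_map_self hbasis, zero_smul, single_eq_zero, zero_smul, map_zero,
      add_zero]
  · intro r hr hr0
    have hr : (r : ℤ) < d := by exact_mod_cast Finset.mem_range.1 hr
    have hr0 : (r : ℤ) ≠ 0 := by exact_mod_cast hr0
    have not_dvd : ∀ x : ℤ, x ≠ 0 → |x| < d → ¬ (d : ℤ) ∣ x := fun x hx0 hxd h =>
      hx0 (Int.eq_zero_of_abs_lt_dvd h hxd)
    rw [nabla_single_smul_map_of_compat hLeib' hcompat, map_add,
      polyphaseProj_single_smul_map_of_not_dvd hbasis _ _ (not_dvd _ ?_ ?_),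
      polyphaseProj_single_smul_map_of_not_dvd hbasis _ _ (not_dvd _ ?_ ?_), add_zero] <;>
    first | omega | (rw [abs_lt]; omega)

end BaseChange

theorem finiteDimensional_of_map_le_of_injective {K M N : Type*} [Field K] [AddCommGroup M]
    [Module K M] [AddCommGroup N] [Module K N] {p : Submodule K M} {q : Submodule K N}
    [FiniteDimensional K q] (f : M →ₗ[K] N) (hf : Function.Injective f) (h : p.map f ≤ q) :
    FiniteDimensional K p :=
  haveI := Submodule.finiteDimensional_of_le h
  (Submodule.equivMapOfInjective f hf p).symm.finiteDimensional

theorem Module.Finite.quotient_of_map_le_of_surjective {R M N : Type*} [Ring R] [AddCommGroup M]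
    [Module R M] [AddCommGroup N] [Module R N] {p : Submodule R M} {q : Submodule R N}
    [Module.Finite R (M ⧸ p)] (f : M →ₗ[R] N) (hf : Function.Surjective f) (h : p.map f ≤ q) :
    Module.Finite R (N ⧸ q) := by
  refine Module.Finite.of_surjective (p.mapQ q f (Submodule.map_le_iff_le_comap.1 h)) ?_
  intro y
  induction y using Submodule.Quotient.induction_on with
  | H n =>
    obtain ⟨m, rfl⟩ := hf n
    exact ⟨Submodule.Quotient.mk m, rfl⟩

theorem stmt_6_general (F : Type*) [Field F] (d : ℕ) (hd : 0 < d) (n : ℕ)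
    {V : Type*} [AddCommGroup V] [Module (LaurentSeries F) V] [Module F V]
    [IsScalarTower F (LaurentSeries F) V]
    (bV : Module.Basis (Fin n) (LaurentSeries F) V)
    (nabla : V →ₗ[F] V)
    {V' : Type*} [AddCommGroup V'] [Module (LaurentSeries F) V'] [Module F V']
    [IsScalarTower F (LaurentSeries F) V']
    (nabla' : V' →ₗ[F] V')
    (hLeib' : ∀ (g : LaurentSeries F) (w : V'),
      nabla' (g • w) = g • nabla' w + (lderiv F g) • w)
    -- `ι : V → V' = V[t^{1/d}]` is semilinear over `t ↦ u^d` and carries a basis to a basis,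
    -- i.e. `V'` is the base change of `V`:
    (ι : V →ₛₗ[rootEmbedding F d hd] V')
    (bV' : Module.Basis (Fin n) (LaurentSeries F) V')
    (hbasis : ∀ i, bV' i = ι (bV i))
    -- compatibility of the connections: `∇'(ι v) = d·u^{d-1} • ι(∇ v)`:
    (hcompat : ∀ v : V,
      nabla' (ι v) =
        (HahnSeries.single ((d : ℤ) - 1) (d : F) : LaurentSeries F) • ι (nabla v)) :
    (FiniteDimensional F (LinearMap.ker nabla') ∧
        FiniteDimensional F (V' ⧸ LinearMap.range nabla')) →
      FiniteDimensional F (LinearMap.ker nabla) ∧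
        FiniteDimensional F (V ⧸ LinearMap.range nabla) := by
  rintro ⟨hker, hcoker⟩
  have hretract (r : ℤ) (v : V) : polyphaseProj hd bV bV' r (single r (1 : F) • ι v) = v := by
    rw [polyphaseProj_single_smul_map_self hbasis, one_smul]
  have hleft : Function.LeftInverse (polyphaseProj hd bV bV' 0) ι := fun v => by
    simpa using hretract 0 v
  constructor
  · refine finiteDimensional_of_map_le_of_injective (q := LinearMap.ker nabla')
      (restrictScalarsOfRootEmbedding ι) hleft.injective ?_
    rintro _ ⟨v, hv, rfl⟩
    simp only [SetLike.mem_coe, LinearMap.mem_ker] at hv ⊢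
    rw [restrictScalarsOfRootEmbedding_apply, hcompat, hv, map_zero, smul_zero]
  · refine Module.Finite.quotient_of_map_le_of_surjective (p := LinearMap.range nabla')
      (polyphaseProj hd bV bV' ((d : ℤ) - 1))
      (fun v => ⟨_, hretract _ v⟩) ?_
    rintro _ ⟨_, ⟨w, rfl⟩, rfl⟩
    exact ⟨(d : F) • polyphaseProj hd bV bV' 0 w,
      by rw [map_smul, polyphaseProj_pred_nabla_of_compat hbasis hLeib' hcompat]⟩

/-- **Lemma \ref{l:extn-scalars}** (Fredholmness descends along ramified extensions): let
`(V, ∇)` be a differential module over `F((t))` (`F` a field of characteristic zero), `d > 0`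
an integer, and `(V', ∇')` the induced differential module `V[t^{1/d}] = V ⊗_{F((t))}
F((t^{1/d}))` — i.e. `V'` is the base change of `V` along `t ↦ u^d`, with connection
determined by the Leibniz rule and `∇'(ι v) = d·u^{d-1} · ι(∇ v)` (the factor coming from
`dt = d·u^{d-1} du`).  If `V[t^{1/d}]` is Fredholm (its de Rham complex has
finite-dimensional kernel and cokernel over `F`), then `(V, ∇)` is Fredholm. -/
theorem stmt_6 (F : Type*) [Field F] [CharZero F] (d : ℕ) (hd : 0 < d) (n : ℕ)
    {V : Type*} [AddCommGroup V] [Module (LaurentSeries F) V] [Module F V]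
    [IsScalarTower F (LaurentSeries F) V]
    (bV : Module.Basis (Fin n) (LaurentSeries F) V)
    (nabla : V →ₗ[F] V)
    (hLeib : ∀ (f : LaurentSeries F) (v : V),
      nabla (f • v) = f • nabla v + (lderiv F f) • v)
    {V' : Type*} [AddCommGroup V'] [Module (LaurentSeries F) V'] [Module F V']
    [IsScalarTower F (LaurentSeries F) V']
    (nabla' : V' →ₗ[F] V')
    (hLeib' : ∀ (g : LaurentSeries F) (w : V'),
      nabla' (g • w) = g • nabla' w + (lderiv F g) • w)
    -- `ι : V → V' = V[t^{1/d}]` is semilinear over `t ↦ u^d` and carries a basis to a basis,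
    -- i.e. `V'` is the base change of `V`:
    (ι : V →ₛₗ[rootEmbedding F d hd] V')
    (bV' : Module.Basis (Fin n) (LaurentSeries F) V')
    (hbasis : ∀ i, bV' i = ι (bV i))
    -- compatibility of the connections: `∇'(ι v) = d·u^{d-1} • ι(∇ v)`:
    (hcompat : ∀ v : V,
      nabla' (ι v) =
        (HahnSeries.single ((d : ℤ) - 1) (d : F) : LaurentSeries F) • ι (nabla v)) :
    (FiniteDimensional F (LinearMap.ker nabla') ∧
        FiniteDimensional F (V' ⧸ LinearMap.range nabla')) →
      FiniteDimensional F (LinearMap.ker nabla) ∧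
        FiniteDimensional F (V ⧸ LinearMap.range nabla) :=
  stmt_6_general F d hd n bV nabla nabla' hLeib' ι bV' hbasis hcompat
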